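/- For every integer k ≥ 0, S_k = (Ī₂)_k + span_ℂ{ k×k minors of the generic matrix (x_{i,j}) }, where a k×k minor is the determinant of the submatrix of (x_{i,j}) with rows i_1 < ⋯ < i_k and columns j_1 < ⋯ < j_k (for k = 0 this span is ℂ·1, and for k > min(m,n) it is 0, so that (Ī₂)_k = S_k in that case). -/

import Mathlib

/-!
Modulo `Ī₂` we have `x_{ij} x_{i'j'} ≡ -x_{ij'} x_{i'j}`; taking `i = i'` or `j = j'` and dividing
by `2`, a product of two variables in a common row or column lies in `Ī₂`. Hence a monomial of
degree `k` either lies in `Ī₂`, or, after sorting its factors by rows, it is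
`∏ₐ x_{r(a), c(τ a)}` with `r`, `c` strictly increasing. Each transposition of the column indices
changes the sign, so this monomial is `≡ sign τ · ∏ₐ x_{r(a), c(a)}`, and expanding the minor with
rows `r` and columns `c` shows that it is `≡ k! · ∏ₐ x_{r(a), c(a)}`. As `k!` is invertible in `ℂ`,
the monomial is a multiple of that minor modulo `(Ī₂)_k`.
-/

open MvPolynomial

/-- Index set for the generalized 2×2 permanents of a generic `m × n` matrix:
quadruples `((i,i'),(j,j'))` with `i ≤ i'` and `j ≤ j'`. -/
def PermIdx (m n : ℕ) : Type :=
  {w : (Fin m × Fin m) × (Fin n × Fin n) // w.1.1 ≤ w.1.2 ∧ w.2.1 ≤ w.2.2}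

/-- The generalized 2×2 permanent
`p_{(i,i'),(j,j')} = x_{i,j} x_{i',j'} + x_{i,j'} x_{i',j}`. -/
noncomputable def perm {m n : ℕ} (w : PermIdx m n) : MvPolynomial (Fin m × Fin n) ℂ :=
  X (w.1.1.1, w.1.2.1) * X (w.1.1.2, w.1.2.2) + X (w.1.1.1, w.1.2.2) * X (w.1.1.2, w.1.2.1)

/-- The ideal `Ī₂ ⊆ S` generated by all generalized 2×2 permanents. -/
noncomputable def I2bar (m n : ℕ) : Ideal (MvPolynomial (Fin m × Fin n) ℂ) :=
  Ideal.span (Set.range (perm (m := m) (n := n)))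

section VanishingPermanents

variable {R ι : Type*} [CommRing R] [Fintype ι] [DecidableEq ι] {B : Matrix ι ι R}

open Equiv in
theorem prod_perm_mul_swap_add_prod_perm_eq_zero
    (hB : ∀ i i' j j', i ≠ i' → B i j * B i' j' + B i j' * B i' j = 0)
    (f : Perm ι) {x y : ι} (hxy : x ≠ y) :
    ∏ i, B i ((f * swap x y) i) + ∏ i, B i (f i) = 0 := by
  have split (g : ι → ι) :
      ∏ i, B i (g i) = B x (g x) * B y (g y) * ∏ i ∈ {x, y}ᶜ, B i (g i) := by
    rw [← Finset.prod_pair (f := fun i => B i (g i)) hxy, Finset.prod_mul_prod_compl]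
  have rest : ∏ i ∈ {x, y}ᶜ, B i ((f * swap x y) i) = ∏ i ∈ {x, y}ᶜ, B i (f i) :=
    Finset.prod_congr rfl fun i hi => by
      simp only [Finset.mem_compl, Finset.mem_insert, Finset.mem_singleton, not_or] at hi
      rw [Perm.mul_apply, swap_apply_of_ne_of_ne hi.1 hi.2]
  rw [split, split f, rest, ← add_mul, Perm.mul_apply, Perm.mul_apply, swap_apply_left,
    swap_apply_right, add_comm, hB x y (f x) (f y) hxy, zero_mul]

theorem prod_perm_eq_sign_smul_prod_diag
    (hB : ∀ i i' j j', i ≠ i' → B i j * B i' j' + B i j' * B i' j = 0) (τ : Equiv.Perm ι) :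
    ∏ i, B i (τ i) = Equiv.Perm.sign τ • ∏ i, B i i := by
  induction τ using Equiv.Perm.swap_induction_on' with
  | one => simp
  | mul_swap f x y hxy ih =>
    rw [eq_neg_of_add_eq_zero_left (prod_perm_mul_swap_add_prod_perm_eq_zero hB f hxy), ih,
      Equiv.Perm.sign_mul, Equiv.Perm.sign_swap hxy, mul_neg_one, Units.neg_smul]

theorem det_eq_factorial_mul_prod_diag
    (hB : ∀ i i' j j', i ≠ i' → B i j * B i' j' + B i j' * B i' j = 0) :
    B.det = (Fintype.card ι).factorial * ∏ i, B i i := by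
  rw [← Matrix.det_transpose, Matrix.det_apply]
  simp only [Matrix.transpose_apply, prod_perm_eq_sign_smul_prod_diag hB, smul_smul,
    Int.units_mul_self, one_smul, Finset.sum_const, Finset.card_univ, Fintype.card_perm,
    nsmul_eq_mul]

end VanishingPermanents

section Homogeneous

variable {σ : Type*}

theorem isHomogeneous_prod_X {R ι : Type*} [CommSemiring R] [Fintype ι] (v : ι → σ) :
    (∏ a, X (v a) : MvPolynomial σ R).IsHomogeneous (Fintype.card ι) := by
  simpa using IsHomogeneous.prod Finset.univ (fun a => (X (v a) : MvPolynomial σ R))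
    (fun _ => 1) (fun a _ => isHomogeneous_X R (v a))

theorem homogeneousSubmodule_eq_span_prod_X {R : Type*} [CommSemiring R] (k : ℕ) :
    homogeneousSubmodule σ R k =
      Submodule.span R (Set.range fun v : Fin k → σ => ∏ a, (X (v a) : MvPolynomial σ R)) := by
  rw [← homogeneousSubmodule_one_pow, homogeneousSubmodule_one_eq_span_X, Submodule.span_pow]
  congr 1
  ext p
  simp only [Set.mem_pow, List.prod_ofFn, Set.mem_range]
  constructor
  · rintro ⟨f, rfl⟩
    choose v hv using fun a => (f a).2
    exact ⟨v, by simp [hv]⟩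
  · rintro ⟨v, rfl⟩
    exact ⟨fun a => ⟨X (v a), v a, rfl⟩, rfl⟩

theorem isHomogeneous_det {R ι : Type*} [CommRing R] [Fintype ι] [DecidableEq ι]
    {M : Matrix ι ι (MvPolynomial σ R)} (hM : ∀ a b, (M a b).IsHomogeneous 1) :
    M.det.IsHomogeneous (Fintype.card ι) := by
  rw [← mem_homogeneousSubmodule, Matrix.det_apply]
  refine Submodule.sum_mem _ fun τ _ => ?_
  rw [Units.smul_def]
  refine zsmul_mem ?_ _
  simpa using IsHomogeneous.prod Finset.univ _ (fun _ => 1) fun a _ => hM (τ a) a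

end Homogeneous

section Minors

variable {m n : ℕ}

theorem X_mul_X_add_X_mul_X_mem_I2bar (i i' : Fin m) (j j' : Fin n) :
    (X (i, j) * X (i', j') + X (i, j') * X (i', j) : MvPolynomial (Fin m × Fin n) ℂ) ∈
      I2bar m n := by
  have mem (w : PermIdx m n) : perm w ∈ I2bar m n := Ideal.subset_span ⟨w, rfl⟩
  rcases le_total i i' with hi | hi <;> rcases le_total j j' with hj | hj
  · exact mem ⟨((i, i'), (j, j')), hi, hj⟩
  · convert mem ⟨((i, i'), (j', j)), hi, hj⟩ using 1; simp only [perm]; ring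
  · convert mem ⟨((i', i), (j, j')), hi, hj⟩ using 1; simp only [perm]; ring
  · convert mem ⟨((i', i), (j', j)), hi, hj⟩ using 1; simp only [perm]; ring

theorem X_mul_X_mem_I2bar {u v : Fin m × Fin n} (h : u.1 = v.1 ∨ u.2 = v.2) :
    X u * X v ∈ I2bar m n := by
  refine (Submodule.smul_mem_iff ((I2bar m n).restrictScalars ℂ) (two_ne_zero (α := ℂ))).mp ?_
  obtain ⟨i, j⟩ := u
  obtain ⟨i', j'⟩ := v
  rw [two_smul, Submodule.restrictScalars_mem]
  rcases h with rfl | rfl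
  · convert X_mul_X_add_X_mul_X_mem_I2bar i i j j' using 2; ring
  · exact X_mul_X_add_X_mul_X_mem_I2bar i i' j j

theorem prod_X_mem_I2bar {ι : Type*} [Fintype ι] {v : ι → Fin m × Fin n} {a b : ι} (hab : a ≠ b)
    (h : (v a).1 = (v b).1 ∨ (v a).2 = (v b).2) : ∏ i, X (v i) ∈ I2bar m n := by
  classical
  rw [← Finset.prod_mul_prod_compl {a, b}, Finset.prod_pair hab]
  exact Ideal.mul_mem_right _ _ (X_mul_X_mem_I2bar h)

noncomputable def minor {ι : Type*} [Fintype ι] [DecidableEq ι] (r : ι → Fin m) (c : ι → Fin n) :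
    MvPolynomial (Fin m × Fin n) ℂ :=
  (Matrix.of fun a b => X (r a, c b)).det

def minors (m n k : ℕ) : Set (MvPolynomial (Fin m × Fin n) ℂ) :=
  {f | ∃ r : Fin k → Fin m, ∃ c : Fin k → Fin n, StrictMono r ∧ StrictMono c ∧ f = minor r c}

theorem span_minors_le_homogeneousSubmodule (k : ℕ) :
    Submodule.span ℂ (minors m n k) ≤ homogeneousSubmodule (Fin m × Fin n) ℂ k := by
  rw [Submodule.span_le]
  rintro _ ⟨r, c, -, -, rfl⟩
  have h := isHomogeneous_det (R := ℂ) fun a b => isHomogeneous_X ℂ (r a, c b)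
  rwa [Fintype.card_fin] at h

theorem factorial_smul_prod_X_sub_sign_smul_minor_mem {k : ℕ} (r : Fin k → Fin m)
    (c : Fin k → Fin n) (τ : Equiv.Perm (Fin k)) :
    k.factorial • ∏ a, X (r a, c (τ a)) - Equiv.Perm.sign τ • minor r c ∈ I2bar m n := by
  set B := (Matrix.of fun a b => (X (r a, c b) : MvPolynomial (Fin m × Fin n) ℂ)).map
    (Ideal.Quotient.mk (I2bar m n))
  have hB (a a' b b') (_ : a ≠ a') : B a b * B a' b' + B a b' * B a' b = 0 := by
    simp only [B, Matrix.map_apply, Matrix.of_apply, ← map_mul, ← map_add,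
      Ideal.Quotient.eq_zero_iff_mem]
    exact X_mul_X_add_X_mul_X_mem_I2bar _ _ _ _
  rw [← Ideal.Quotient.eq_zero_iff_mem, map_sub, map_nsmul, Units.smul_def, map_zsmul, minor,
    RingHom.map_det, map_prod]
  change k.factorial • ∏ a, B a (τ a) - _ • B.det = 0
  rw [prod_perm_eq_sign_smul_prod_diag hB, det_eq_factorial_mul_prod_diag hB, Fintype.card_fin,
    Units.smul_def, nsmul_eq_mul, zsmul_eq_mul, zsmul_eq_mul]
  ring

theorem exists_perm_strictMono_comp {α : Type*} [LinearOrder α] {k : ℕ} {f : Fin k → α}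
    (hf : Function.Injective f) : ∃ σ : Equiv.Perm (Fin k), StrictMono (f ∘ σ) :=
  ⟨Tuple.sort f, (Tuple.monotone_sort f).strictMono_of_injective (hf.comp (Tuple.sort f).injective)⟩

theorem exists_perm_eq_strictMono_prod_strictMono_perm {α β : Type*} [LinearOrder α]
    [LinearOrder β] {k : ℕ} {v : Fin k → α × β} (hfst : Function.Injective (Prod.fst ∘ v))
    (hsnd : Function.Injective (Prod.snd ∘ v)) :
    ∃ (σ τ : Equiv.Perm (Fin k)) (r : Fin k → α) (c : Fin k → β),
      StrictMono r ∧ StrictMono c ∧ ∀ a, v (σ a) = (r a, c (τ a)) := by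
  obtain ⟨σ, hσ⟩ := exists_perm_strictMono_comp hfst
  obtain ⟨π, hπ⟩ := exists_perm_strictMono_comp (hsnd.comp σ.injective)
  exact ⟨σ, π⁻¹, _, _, hσ, hπ, fun a => by simp⟩

theorem mem_inf_sup_of_sub_mem {R M : Type*} [Ring R] [AddCommGroup M] [Module R M]
    {I S N : Submodule R M} (hN : N ≤ S) {p q : M} (hp : p ∈ S) (hq : q ∈ N) (hpq : p - q ∈ I) :
    p ∈ I ⊓ S ⊔ N := by
  rw [← sub_add_cancel p q]
  exact Submodule.add_mem_sup ⟨hpq, S.sub_mem hp (hN hq)⟩ hq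

theorem prod_X_mem_sup_span_minors {k : ℕ} (v : Fin k → Fin m × Fin n) :
    ∏ a, X (v a) ∈ (I2bar m n).restrictScalars ℂ ⊓ homogeneousSubmodule (Fin m × Fin n) ℂ k ⊔
      Submodule.span ℂ (minors m n k) := by
  have hom (w : Fin k → Fin m × Fin n) : ∏ a, X (w a) ∈ homogeneousSubmodule _ ℂ k := by
    simpa using isHomogeneous_prod_X (R := ℂ) w
  by_cases hrep : ∃ a b, a ≠ b ∧ ((v a).1 = (v b).1 ∨ (v a).2 = (v b).2)
  · obtain ⟨a, b, hab, h⟩ := hrep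
    refine mem_inf_sup_of_sub_mem (span_minors_le_homogeneousSubmodule k) (hom v)
      (Submodule.zero_mem _) ?_
    simpa using prod_X_mem_I2bar hab h
  push Not at hrep
  obtain ⟨σ, τ, r, c, hr, hc, hv⟩ := exists_perm_eq_strictMono_prod_strictMono_perm
    (v := v) (fun a b h => by_contra fun hab => (hrep a b hab).1 h)
    (fun a b h => by_contra fun hab => (hrep a b hab).2 h)
  rw [← Equiv.prod_comp σ]
  simp_rw [hv]
  have hk : (k.factorial : ℂ) ≠ 0 := mod_cast k.factorial_ne_zero
  rw [← Submodule.smul_mem_iff _ hk, Nat.cast_smul_eq_nsmul]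
  refine mem_inf_sup_of_sub_mem (span_minors_le_homogeneousSubmodule k)
    (nsmul_mem (hom fun a => (r a, c (τ a))) _) ?_
    (factorial_smul_prod_X_sub_sign_smul_minor_mem r c τ)
  have hminor : minor r c ∈ minors m n k := ⟨r, c, hr, hc, rfl⟩
  rw [Units.smul_def]
  exact zsmul_mem (Submodule.subset_span hminor) _

end Minors

theorem homogeneous_component_eq_permanents_sup_minors_general (m n : ℕ)
    (k : ℕ) :
    homogeneousSubmodule (Fin m × Fin n) ℂ k =
      (Submodule.restrictScalars ℂ (I2bar m n) ⊓
          homogeneousSubmodule (Fin m × Fin n) ℂ k) ⊔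
        Submodule.span ℂ
          {f | ∃ r : Fin k → Fin m, ∃ c : Fin k → Fin n, StrictMono r ∧ StrictMono c ∧
            f = (Matrix.of fun a b =>
              (X (r a, c b) : MvPolynomial (Fin m × Fin n) ℂ)).det} := by
  change _ = _ ⊔ Submodule.span ℂ (minors m n k)
  refine le_antisymm ?_ (sup_le inf_le_right (span_minors_le_homogeneousSubmodule k))
  conv_lhs => rw [homogeneousSubmodule_eq_span_prod_X]
  exact Submodule.span_le.mpr (Set.range_subset_iff.mpr prod_X_mem_sup_span_minors)

/-- For every `k`, `S_k = (Ī₂)_k + span_ℂ{k×k minors of the generic matrix}`. -/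
theorem homogeneous_component_eq_permanents_sup_minors (m n : ℕ)
    (hm : 1 ≤ m) (hn : 1 ≤ n) (k : ℕ) :
    homogeneousSubmodule (Fin m × Fin n) ℂ k =
      (Submodule.restrictScalars ℂ (I2bar m n) ⊓
          homogeneousSubmodule (Fin m × Fin n) ℂ k) ⊔
        Submodule.span ℂ
          {f | ∃ r : Fin k → Fin m, ∃ c : Fin k → Fin n, StrictMono r ∧ StrictMono c ∧
            f = (Matrix.of fun a b =>
              (X (r a, c b) : MvPolynomial (Fin m × Fin n) ℂ)).det} :=
  homogeneous_component_eq_permanents_sup_minors_general m n k
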